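/- arXiv:1903.08326 — 6 statements merged into one kernel-verified Lean document; each statement's English description precedes it below -/
import Mathlib

section
/- Let n ≥ 2 and 1 ≤ s ≤ n−1, let S ⊆ {1,…,n} with |S| = n−s and elements g_1 < ⋯ < g_{n−s}, set γ_j = ρ_{g_j}^{(n)} for j = 1,…,n−s, and let G be the (n−s)×(n−s) real matrix with (i,j) entry T_{i−1}(γ_j). Then G is invertible and ‖G⁻¹‖_F² ≤ (2/n) · Σ_{k=1}^{n−s} Σ_{i=1}^{n} L_k(ρ_i^{(n)})², where L_k is the k-th Lagrange basis polynomial associated with γ_1,…,γ_{n−s}. -/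
open Polynomial

/-- The `i`-th Chebyshev point of degree `n`: `ρ_i^{(n)} = cos((2i-1)π/(2n))`. -/
noncomputable def chebPt (n i : ℕ) : ℝ :=
  Real.cos ((2 * (i : ℝ) - 1) * Real.pi / (2 * (n : ℝ)))

/-- The `k`-th Lagrange basis function associated with nodes `γ`. -/
noncomputable def lagrangeBasis {r : ℕ} (γ : Fin r → ℝ) (k : Fin r) (x : ℝ) : ℝ :=
  ∏ j ∈ Finset.univ.erase k, (x - γ j) / (γ k - γ j)

/-!
Let `C` be the matrix whose `k`-th row holds the coefficients of `L_k` in the basis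
`T_0, …, T_{r-1}` of polynomials of degree `< r`. Evaluating at the nodes gives `C G = 1`, so `G`
is invertible with `G⁻¹ = C`. Gauss–Chebyshev quadrature at the `n` Chebyshev points is exact in
degree `< 2n`, so for `a, b < n` the discrete sums `∑ᵢ T_a(ρᵢ) T_b(ρᵢ)` inherit the continuous
orthogonality relations: they vanish for `a ≠ b` and are at least `n/2` for `a = b`. Hence
`∑ᵢ L_k(ρᵢ)² ≥ (n/2) ∑_a C_{ka}²`.
-/

open Finset Real

namespace Polynomial.Sequence

variable {K : Type*} [Field K] (S : Sequence K) {r : ℕ}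

theorem exists_sum_smul_eq_of_degree_lt {p : K[X]} (hp : p.degree < r) :
    ∃ c : Fin r → K, ∑ a, c a • S a = p := by
  have hspan : p ∈ Submodule.span K (Set.range fun a : Fin r ↦ S a) := by
    rw [Set.range_comp' S Fin.val, Fin.range_val,
      S.span_degreeLT fun i _ ↦ (leadingCoeff_ne_zero.2 (S.ne_zero i)).isUnit]
    exact mem_degreeLT.2 hp
  exact (Submodule.mem_span_range_iff_exists_fun K).1 hspan

def evalMatrix (γ : Fin r → K) : Matrix (Fin r) (Fin r) K :=
  Matrix.of fun a j ↦ (S a).eval (γ j)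

variable {S} {γ : Fin r → K}

theorem exists_mul_evalMatrix_eq_one (hγ : Function.Injective γ) :
    ∃ C : Matrix (Fin r) (Fin r) K,
      C * S.evalMatrix γ = 1 ∧ ∀ k, ∑ a, C k a • S a = Lagrange.basis univ γ k := by
  have hdeg (k : Fin r) : (Lagrange.basis univ γ k).degree < r := by
    rw [Lagrange.degree_basis hγ.injOn (mem_univ k), card_univ, Fintype.card_fin]
    exact_mod_cast Nat.sub_one_lt k.pos.ne'
  choose C hC using fun k ↦ S.exists_sum_smul_eq_of_degree_lt (hdeg k)
  refine ⟨Matrix.of C, ?_, hC⟩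
  ext k j
  have := congrArg (eval (γ j)) (hC k)
  simp only [eval_finsetSum, eval_smul, smul_eq_mul] at this
  rw [Matrix.mul_apply, Matrix.one_apply]
  simp only [evalMatrix, Matrix.of_apply, this]
  split_ifs with hkj
  · rw [hkj, Lagrange.eval_basis_self hγ.injOn (mem_univ j)]
  · exact Lagrange.eval_basis_of_ne hkj (mem_univ j)

theorem isUnit_det_evalMatrix (hγ : Function.Injective γ) : IsUnit (S.evalMatrix γ).det :=
  let ⟨_, hC, _⟩ := exists_mul_evalMatrix_eq_one (S := S) hγ
  Matrix.isUnit_det_of_left_inverse hC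

theorem sum_inv_evalMatrix_smul (hγ : Function.Injective γ) (k : Fin r) :
    ∑ a, (S.evalMatrix γ)⁻¹ k a • S a = Lagrange.basis univ γ k := by
  obtain ⟨C, hC, hCL⟩ := exists_mul_evalMatrix_eq_one (S := S) hγ
  rw [Matrix.inv_eq_left_inv hC]
  exact hCL k

end Polynomial.Sequence

namespace Polynomial.Chebyshev

theorem degree_T_mul_T_lt {n a b : ℕ} (ha : a < n) (hb : b < n) :
    (T ℝ a * T ℝ b).degree < 2 * n := by
  rw [degree_mul, degree_T, degree_T]
  exact_mod_cast (by omega : a + b < 2 * n)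

theorem sumZeroes_T_mul_T_of_ne {n a b : ℕ} (ha : a < n) (hb : b < n) (hab : a ≠ b) :
    sumZeroes n (T ℝ a * T ℝ b) = 0 := by
  rw [← integral_eq_sumZeroes (by omega) (degree_T_mul_T_lt ha hb)]
  simpa only [eval_mul] using integral_eval_T_real_mul_eval_T_real_measureT_of_ne hab

theorem pi_div_two_le_sumZeroes_T_mul_self {n a : ℕ} (ha : a < n) :
    π / 2 ≤ sumZeroes n (T ℝ a * T ℝ a) := by
  rw [← integral_eq_sumZeroes (by omega) (degree_T_mul_T_lt ha ha)]
  simp only [eval_mul]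
  rcases eq_or_ne a 0 with rfl | ha0
  · rw [Nat.cast_zero, integral_eval_T_real_mul_self_measureT_zero]
    linarith [pi_pos]
  · rw [integral_T_real_mul_self_measureT_of_ne_zero ha0]

theorem pi_div_two_mul_sum_sq_le_sumZeroes {n r : ℕ} (hr : r ≤ n) (c : Fin r → ℝ) :
    π / 2 * ∑ a, c a ^ 2 ≤ sumZeroes n ((∑ a, c a • T ℝ a) ^ 2) := by
  have hoff (a b : Fin r) (hab : b ≠ a) :
      sumZeroes n ((c a • T ℝ a) * (c b • T ℝ b)) = 0 := by
    rw [smul_mul_smul, sumZeroes_smul,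
      sumZeroes_T_mul_T_of_ne (by omega) (by omega) (fun h ↦ hab (Fin.ext h.symm)), mul_zero]
  rw [sq, sum_mul_sum, sumZeroes_sum, mul_sum]
  refine sum_le_sum fun a _ ↦ ?_
  rw [sumZeroes_sum, sum_eq_single a (fun b _ hb ↦ hoff a b hb) (by simp), smul_mul_smul,
    sumZeroes_smul, ← sq, mul_comm]
  exact mul_le_mul_of_nonneg_left (pi_div_two_le_sumZeroes_T_mul_self (by omega)) (sq_nonneg _)

end Polynomial.Chebyshev

theorem sumZeroes_eq_sum_chebPt (n : ℕ) (P : ℝ[X]) :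
    Chebyshev.sumZeroes n P = π / n * ∑ i ∈ Icc 1 n, P.eval (chebPt n i) := by
  rw [Chebyshev.sumZeroes, ← Finset.Ico_add_one_right_eq_Icc, sum_Ico_eq_sum_range,
    Nat.add_sub_cancel]
  congr 2 with i
  rw [chebPt]
  push_cast
  ring_nf

theorem chebPt_injOn (n : ℕ) : Set.InjOn (chebPt n) (Set.Icc 1 n) := by
  intro i hi j hj hij
  have hn : (0 : ℝ) < n := by have := hi.1.trans hi.2; positivity
  have hangle {i : ℕ} (hi : i ∈ Set.Icc 1 n) :
      (2 * (i : ℝ) - 1) * π / (2 * n) ∈ Set.Icc 0 π := by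
    have h1 : (1 : ℝ) ≤ i := by exact_mod_cast hi.1
    have h2 : (i : ℝ) ≤ n := by exact_mod_cast hi.2
    constructor
    · exact div_nonneg (mul_nonneg (by linarith) pi_pos.le) (by positivity)
    · rw [div_le_iff₀ (by positivity)]
      nlinarith [pi_pos]
  have := injOn_cos (hangle hi) (hangle hj) hij
  field_simp at this
  exact_mod_cast (by linarith : (i : ℝ) = j)

theorem lagrangeBasis_eq_eval_basis {r : ℕ} (γ : Fin r → ℝ) (k : Fin r) (x : ℝ) :
    lagrangeBasis γ k x = (Lagrange.basis univ γ k).eval x := by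
  simp [lagrangeBasis, Lagrange.basis, Lagrange.basisDivisor, eval_prod, div_eq_inv_mul]

theorem sum_sq_le_two_div_mul_sum_sq_eval_chebPt {n r : ℕ} (hr : r ≤ n) (c : Fin r → ℝ) :
    ∑ a, c a ^ 2 ≤
      2 / n * ∑ i ∈ Icc 1 n, ((∑ a, c a • Chebyshev.T ℝ a).eval (chebPt n i)) ^ 2 := by
  rcases Nat.eq_zero_or_pos n with rfl | hn
  · obtain rfl : r = 0 := Nat.le_zero.1 hr
    simp
  have h := Chebyshev.pi_div_two_mul_sum_sq_le_sumZeroes hr c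
  rw [sumZeroes_eq_sum_chebPt] at h
  simp only [eval_pow] at h
  have hn' : (0 : ℝ) < n := by exact_mod_cast hn
  calc ∑ a, c a ^ 2 = 2 / π * (π / 2 * ∑ a, c a ^ 2) := by field_simp
    _ ≤ 2 / π * (π / n * ∑ i ∈ Icc 1 n, (eval (chebPt n i) (∑ a, c a • Chebyshev.T ℝ a)) ^ 2) :=
        mul_le_mul_of_nonneg_left h (by positivity)
    _ = _ := by field_simp

theorem stmt_2_general (n s : ℕ)
    (g : Fin (n - s) → ℕ) (hg : StrictMono g) (hgmem : ∀ j, g j ∈ Finset.Icc 1 n)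
    (γ : Fin (n - s) → ℝ) (hγ : ∀ j, γ j = chebPt n (g j))
    (G : Matrix (Fin (n - s)) (Fin (n - s)) ℝ)
    (hG : ∀ i j, G i j = (Polynomial.Chebyshev.T ℝ (i : ℕ)).eval (γ j)) :
    IsUnit G.det ∧
      (∑ i, ∑ j, (G⁻¹ i j) ^ 2) ≤
        (2 / (n : ℝ)) *
          ∑ k : Fin (n - s), ∑ i ∈ Finset.Icc 1 n, (lagrangeBasis γ k (chebPt n i)) ^ 2 := by
  have hγinj : Function.Injective γ := fun j j' h ↦ hg.injective <|
    chebPt_injOn n (by simpa using hgmem j) (by simpa using hgmem j') (by rwa [← hγ, ← hγ])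
  have hGT : G = (Chebyshev.chebyshevTsequence ℝ).evalMatrix γ := Matrix.ext hG
  refine ⟨hGT ▸ Sequence.isUnit_det_evalMatrix hγinj, ?_⟩
  rw [mul_sum]
  refine sum_le_sum fun k _ ↦ ?_
  have hL (x : ℝ) : lagrangeBasis γ k x = (∑ a, G⁻¹ k a • Chebyshev.T ℝ (a : ℕ)).eval x := by
    rw [lagrangeBasis_eq_eval_basis, ← Sequence.sum_inv_evalMatrix_smul hγinj k, hGT]
    rfl
  simp only [hL]
  exact sum_sq_le_two_div_mul_sum_sq_eval_chebPt (Nat.sub_le n s) _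

/-- For `n ≥ 2`, `1 ≤ s ≤ n-1`, and a subset of `{1,…,n}` of size `n - s` enumerated by a
strictly increasing `g`, setting `γ_j = ρ_{g j}^{(n)}`, the Chebyshev-Vandermonde matrix `G`
with entries `T_{i-1}(γ_j)` is invertible and
`‖G⁻¹‖_F² ≤ (2/n) ∑_{k} ∑_{i=1}^n L_k(ρ_i^{(n)})²`. -/
theorem stmt_2 (n s : ℕ) (hn : 2 ≤ n) (hs1 : 1 ≤ s) (hs2 : s ≤ n - 1)
    (g : Fin (n - s) → ℕ) (hg : StrictMono g) (hgmem : ∀ j, g j ∈ Finset.Icc 1 n)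
    (γ : Fin (n - s) → ℝ) (hγ : ∀ j, γ j = chebPt n (g j))
    (G : Matrix (Fin (n - s)) (Fin (n - s)) ℝ)
    (hG : ∀ i j, G i j = (Polynomial.Chebyshev.T ℝ (i : ℕ)).eval (γ j)) :
    IsUnit G.det ∧
      (∑ i, ∑ j, (G⁻¹ i j) ^ 2) ≤
        (2 / (n : ℝ)) *
          ∑ k : Fin (n - s), ∑ i ∈ Finset.Icc 1 n, (lagrangeBasis γ k (chebPt n i)) ^ 2 :=
  stmt_2_general n s g hg hgmem γ hγ G hG
end

section
/- (Gauss–Chebyshev quadrature with equal weights.) For every integer n ≥ 1 and every real polynomial f with deg f ≤ 2n−1, one has ∫_{−1}^{1} f(x)/√(1−x²) dx = (π/n) · Σ_{i=1}^{n} f(ρ_i^{(n)}). -/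
open Polynomial

theorem chebPt_succ (n i : ℕ) :
    chebPt n (i + 1) = Real.cos ((2 * i + 1) / (2 * n) * Real.pi) := by
  rw [chebPt]
  push_cast
  ring_nf

namespace Polynomial.Chebyshev

open Real Finset

theorem sumZeroes_eq_sum_Icc_chebPt (n : ℕ) (P : ℝ[X]) :
    sumZeroes n P = (π / n) * ∑ i ∈ Icc 1 n, P.eval (chebPt n i) := by
  have hshift := sum_Ico_add' (fun i ↦ P.eval (chebPt n i)) 0 n 1
  rw [zero_add, Ico_add_one_right_eq_Icc, ← range_eq_Ico] at hshift
  simp only [sumZeroes, ← hshift, chebPt_succ]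

end Polynomial.Chebyshev

open Polynomial.Chebyshev in
/-- Gauss–Chebyshev quadrature with equal weights: for `n ≥ 1` and every real polynomial `f`
with `deg f ≤ 2n - 1`,
`∫_{-1}^{1} f(x)/√(1-x²) dx = (π/n) ∑_{i=1}^{n} f(ρ_i^{(n)})`. -/
theorem stmt_5 (n : ℕ) (hn : 1 ≤ n) (f : Polynomial ℝ) (hf : f.natDegree ≤ 2 * n - 1) :
    ∫ x in (-1 : ℝ)..1, f.eval x / Real.sqrt (1 - x ^ 2) =
      (Real.pi / n) * ∑ i ∈ Finset.Icc 1 n, f.eval (chebPt n i) := by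
  have hdeg : f.degree < 2 * n :=
    degree_le_natDegree.trans_lt (by exact_mod_cast (by omega : f.natDegree < 2 * n))
  rw [← sumZeroes_eq_sum_Icc_chebPt, ← integral_eq_sumZeroes (by omega) hdeg, integral_measureT]
  simp only [Real.sqrt_inv, div_eq_mul_inv]
end

section
/- Let n ≥ 2 and 1 ≤ s ≤ n−1, let S ⊆ {1,…,n} with |S| = s, let g_1 < ⋯ < g_{n−s} enumerate {1,…,n}∖S, and set γ_j = ρ_{g_j}^{(n)}. Then for every k ∈ {1,…,n−s} and every i ∈ S: ∏_{j∈{1,…,n−s}, j≠k} ( (ρ_i^{(n)} − γ_j)/(γ_k − γ_j) )² ≤ 4^{s−1} / ( sin²((2i−1)π/(2n)) · (cos(π/(2n)) − cos(3π/(2n)))^{2(s−1)} ). -/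
open Real Finset

noncomputable def ff (n : ℕ) (k : ℤ) : ℝ := |Real.sin (k * Real.pi / (2 * n))|

lemma ff_nonneg (n : ℕ) (k : ℤ) : 0 ≤ ff n k := abs_nonneg _

lemma ff_mod (n : ℕ) (hn : 1 ≤ n) (k : ℤ) : ff n (k % (2 * n)) = ff n k := by
  have hn0 : (n : ℝ) ≠ 0 := Nat.cast_ne_zero.2 (by omega)
  unfold ff
  have h : ((k % (2 * (n : ℤ)) : ℤ) : ℝ) * Real.pi / (2 * n) =
      k * Real.pi / (2 * n) + (-(k / (2 * (n : ℤ))) : ℤ) * Real.pi := by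
    rw [Int.emod_def]
    push_cast
    field_simp
    ring
  rw [h, Real.sin_add_int_mul_pi, abs_mul]
  have h1 : |((-1 : ℝ)) ^ (-(k / (2 * (n : ℤ))))| = 1 := by
    rcases Int.even_or_odd (-(k / (2 * (n : ℤ)))) with he | ho
    · rw [he.neg_one_zpow]; simp
    · rw [ho.neg_one_zpow]; simp
  rw [h1, one_mul]



noncomputable def CC (n : ℕ) : ℝ := ∏ r ∈ Finset.Icc (1 : ℤ) (2 * n - 1), ff n r

lemma quot_zero {c Q : ℤ} (hc : 0 < c) (h1 : -c < c * Q) (h2 : c * Q < c) : Q = 0 := by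
  rcases lt_trichotomy Q 0 with h | h | h
  · exfalso
    have : c * Q ≤ c * (-1) := mul_le_mul_of_nonneg_left (by omega) hc.le
    linarith
  · exact h
  · exfalso
    have : c * 1 ≤ c * Q := mul_le_mul_of_nonneg_left (by omega) hc.le
    linarith


lemma prod_window (n : ℕ) (hn : 1 ≤ n) (m : ℤ) (hm : m ≤ 0) (hm' : 0 < m + 2 * n) :
    ∏ k ∈ (Finset.Ico m (m + 2 * n)).erase 0, ff n k = CC n := by
  have h2n : (0 : ℤ) < 2 * n := by omega
  refine Finset.prod_nbij' (fun k => k % (2 * n)) (fun r => m + (r - m) % (2 * n)) ?_ ?_ ?_ ?_ ?_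
  · intro k hk
    simp only [Finset.mem_erase, Finset.mem_Ico] at hk
    obtain ⟨hk0, hk1, hk2⟩ := hk
    have h1 : 0 ≤ k % (2 * (n : ℤ)) := Int.emod_nonneg _ (by omega)
    have h2 : k % (2 * (n : ℤ)) < 2 * n := Int.emod_lt_of_pos _ h2n
    have hdef : k % (2 * (n : ℤ)) = k - 2 * n * (k / (2 * n)) := Int.emod_def k _
    have h3 : k % (2 * (n : ℤ)) ≠ 0 := by
      intro h
      rw [hdef] at h
      have hk' : k = 2 * n * (k / (2 * (n : ℤ))) := by linarith
      have hq : k / (2 * (n : ℤ)) = 0 := by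
        refine quot_zero h2n ?_ ?_ <;> nlinarith
      rw [hq] at hk'
      simp at hk'
      exact hk0 hk'
    simp only [Finset.mem_Icc]
    omega
  · intro r hr
    simp only [Finset.mem_Icc] at hr
    have h1 : 0 ≤ (r - m) % (2 * (n : ℤ)) := Int.emod_nonneg _ (by omega)
    have h2 : (r - m) % (2 * (n : ℤ)) < 2 * n := Int.emod_lt_of_pos _ h2n
    have hdef : (r - m) % (2 * (n : ℤ)) = r - m - 2 * n * ((r - m) / (2 * n)) := by
      rw [Int.emod_def]
    simp only [Finset.mem_erase, Finset.mem_Ico]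
    refine ⟨?_, by omega, by omega⟩
    intro h
    rw [hdef] at h
    set q := (r - m) / (2 * (n : ℤ)) with hqdef
    have hr2 : r = 2 * n * q := by linarith
    have hq : q = 0 := by
      refine quot_zero h2n ?_ ?_ <;> nlinarith
    rw [hq] at hr2
    simp at hr2
    omega
  · intro k hk
    simp only [Finset.mem_erase, Finset.mem_Ico] at hk
    obtain ⟨hk0, hk1, hk2⟩ := hk
    show m + (k % (2 * (n : ℤ)) - m) % (2 * n) = k
    have h1 : 0 ≤ k % (2 * (n : ℤ)) := Int.emod_nonneg _ (by omega)
    have h2 : k % (2 * (n : ℤ)) < 2 * n := Int.emod_lt_of_pos _ h2n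
    have hdef : k % (2 * (n : ℤ)) = k - 2 * n * (k / (2 * n)) := Int.emod_def k _
    set e1 := k % (2 * (n : ℤ)) with he1
    have h3 : 0 ≤ (e1 - m) % (2 * (n : ℤ)) := Int.emod_nonneg _ (by omega)
    have h4 : (e1 - m) % (2 * (n : ℤ)) < 2 * n := Int.emod_lt_of_pos _ h2n
    have hdef2 : (e1 - m) % (2 * (n : ℤ)) = e1 - m - 2 * n * ((e1 - m) / (2 * n)) :=
      Int.emod_def _ _
    set q1 := k / (2 * (n : ℤ))
    set q2 := (e1 - m) / (2 * (n : ℤ))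
    have hQ : q1 + q2 = 0 := by
      refine quot_zero h2n ?_ ?_ <;> nlinarith
    have hq2 : q2 = -q1 := by omega
    rw [hdef2, hq2, hdef]
    ring
  · intro r hr
    simp only [Finset.mem_Icc] at hr
    show (m + (r - m) % (2 * (n : ℤ))) % (2 * n) = r
    have h1 : 0 ≤ (r - m) % (2 * (n : ℤ)) := Int.emod_nonneg _ (by omega)
    have h2 : (r - m) % (2 * (n : ℤ)) < 2 * n := Int.emod_lt_of_pos _ h2n
    have hdef : (r - m) % (2 * (n : ℤ)) = r - m - 2 * n * ((r - m) / (2 * n)) :=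
      Int.emod_def _ _
    set e1 := (r - m) % (2 * (n : ℤ)) with he1
    set q := (r - m) / (2 * (n : ℤ))
    have h3 : 0 ≤ (m + e1) % (2 * (n : ℤ)) := Int.emod_nonneg _ (by omega)
    have h4 : (m + e1) % (2 * (n : ℤ)) < 2 * n := Int.emod_lt_of_pos _ h2n
    have hdef2 : (m + e1) % (2 * (n : ℤ)) = m + e1 - 2 * n * ((m + e1) / (2 * n)) :=
      Int.emod_def _ _
    set q3 := (m + e1) / (2 * (n : ℤ))
    have hQ : q + q3 = 0 := by
      refine quot_zero h2n ?_ ?_ <;> nlinarith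
    have hq3 : q3 = -q := by omega
    rw [hdef2, hq3, hdef]
    ring
  · intro k _
    exact (ff_mod n hn k).symm

lemma key (n : ℕ) (hn : 1 ≤ n) (a : ℕ) (ha1 : 1 ≤ a) (ha2 : a ≤ n) :
    |∏ m ∈ (Finset.Icc 1 n).erase a, (chebPt n a - chebPt n m)| *
      Real.sin ((2 * (a : ℝ) - 1) * Real.pi / (2 * n)) = 2 ^ (n - 1) * CC n := by
  have hn0 : (n : ℝ) ≠ 0 := Nat.cast_ne_zero.2 (by omega)
  have hnpos : (0 : ℝ) < n := by positivity
  have haR : (1 : ℝ) ≤ (a : ℝ) := by exact_mod_cast ha1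
  have haR2 : (a : ℝ) ≤ n := by exact_mod_cast ha2
  -- sin θ_a = ff n (2a-1)
  have hsin : Real.sin ((2 * (a : ℝ) - 1) * Real.pi / (2 * n)) = ff n (2 * (a : ℤ) - 1) := by
    unfold ff
    have hcast : ((2 * (a : ℤ) - 1 : ℤ) : ℝ) = 2 * (a : ℝ) - 1 := by push_cast; ring
    rw [hcast, abs_of_nonneg]
    apply Real.sin_nonneg_of_nonneg_of_le_pi
    · apply div_nonneg (by nlinarith [Real.pi_pos]) (by linarith)
    · rw [div_le_iff₀ (by linarith : (0:ℝ) < 2 * n)]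
      nlinarith [Real.pi_pos]
  rw [hsin]
  -- per-factor identity
  have hfac : ∀ m ∈ (Finset.Icc 1 n).erase a,
      |chebPt n a - chebPt n m| = 2 * ff n ((a : ℤ) + m - 1) * ff n ((a : ℤ) - m) := by
    intro m hm
    simp only [Finset.mem_erase, Finset.mem_Icc] at hm
    unfold chebPt
    rw [Real.cos_sub_cos]
    have e1 : ((2 * (a : ℝ) - 1) * Real.pi / (2 * n) + (2 * (m : ℝ) - 1) * Real.pi / (2 * n)) / 2
        = (((a : ℤ) + m - 1 : ℤ) : ℝ) * Real.pi / (2 * n) := by push_cast; field_simp; ring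
    have e2 : ((2 * (a : ℝ) - 1) * Real.pi / (2 * n) - (2 * (m : ℝ) - 1) * Real.pi / (2 * n)) / 2
        = (((a : ℤ) - m : ℤ) : ℝ) * Real.pi / (2 * n) := by push_cast; field_simp; ring
    rw [e1, e2]
    unfold ff
    rw [abs_mul, abs_mul]
    norm_num
  rw [Finset.abs_prod, Finset.prod_congr rfl hfac]
  rw [Finset.prod_mul_distrib, Finset.prod_mul_distrib, Finset.prod_const]
  have hcard : ((Finset.Icc 1 n).erase a).card = n - 1 := by
    rw [Finset.card_erase_of_mem (by simp [Finset.mem_Icc]; omega), Nat.card_Icc]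
    omega
  rw [hcard]
  -- reindex products
  have hA : ∏ m ∈ (Finset.Icc 1 n).erase a, ff n ((a : ℤ) + m - 1)
      = ∏ k ∈ (Finset.Ico (a : ℤ) ((a : ℤ) + n)).erase (2 * (a : ℤ) - 1), ff n k := by
    refine Finset.prod_nbij' (fun m => (a : ℤ) + m - 1) (fun k => (k - a + 1).toNat) ?_ ?_ ?_ ?_ ?_
    · intro m hm; simp only [Finset.mem_erase, Finset.mem_Icc] at hm
      simp only [Finset.mem_erase, Finset.mem_Ico]; omega
    · intro k hk; simp only [Finset.mem_erase, Finset.mem_Ico] at hk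
      simp only [Finset.mem_erase, Finset.mem_Icc]; omega
    · intro m hm; simp only [Finset.mem_erase, Finset.mem_Icc] at hm; beta_reduce; omega
    · intro k hk; simp only [Finset.mem_erase, Finset.mem_Ico] at hk; beta_reduce; omega
    · intro m _; rfl
  have hB : ∏ m ∈ (Finset.Icc 1 n).erase a, ff n ((a : ℤ) - m)
      = ∏ k ∈ (Finset.Ico ((a : ℤ) - n) (a : ℤ)).erase 0, ff n k := by
    refine Finset.prod_nbij' (fun m => (a : ℤ) - m) (fun k => ((a : ℤ) - k).toNat) ?_ ?_ ?_ ?_ ?_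
    · intro m hm; simp only [Finset.mem_erase, Finset.mem_Icc] at hm
      simp only [Finset.mem_erase, Finset.mem_Ico]; omega
    · intro k hk; simp only [Finset.mem_erase, Finset.mem_Ico] at hk
      simp only [Finset.mem_erase, Finset.mem_Icc]; omega
    · intro m hm; simp only [Finset.mem_erase, Finset.mem_Icc] at hm; beta_reduce; omega
    · intro k hk; simp only [Finset.mem_erase, Finset.mem_Ico] at hk; beta_reduce; omega
    · intro m _; rfl
  rw [hA, hB]
  -- assemble into window product
  have hsplit : ((Finset.Ico ((a : ℤ) - n) ((a : ℤ) + n)).erase 0) =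
      ((Finset.Ico ((a : ℤ) - n) (a : ℤ)).erase 0) ∪
        insert (2 * (a : ℤ) - 1) ((Finset.Ico (a : ℤ) ((a : ℤ) + n)).erase (2 * (a : ℤ) - 1)) := by
    ext k
    simp only [Finset.mem_erase, Finset.mem_Ico, Finset.mem_union, Finset.mem_insert]
    omega
  have hdisj : Disjoint ((Finset.Ico ((a : ℤ) - n) (a : ℤ)).erase 0)
      (insert (2 * (a : ℤ) - 1) ((Finset.Ico (a : ℤ) ((a : ℤ) + n)).erase (2 * (a : ℤ) - 1))) := by
    rw [Finset.disjoint_left]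
    intro k hk hk'
    simp only [Finset.mem_erase, Finset.mem_Ico] at hk
    simp only [Finset.mem_insert, Finset.mem_erase, Finset.mem_Ico] at hk'
    omega
  have hwin := prod_window n hn ((a : ℤ) - n) (by omega) (by push_cast; omega)
  rw [show (a : ℤ) - n + 2 * n = (a : ℤ) + n by ring] at hwin
  rw [hsplit, Finset.prod_union hdisj, Finset.prod_insert (Finset.notMem_erase _ _)] at hwin
  rw [← hwin]
  ring


lemma sin_ge_aux {x y : ℝ} (hy0 : 0 ≤ y) (hy : y ≤ Real.pi / 2) (h1 : y ≤ x)
    (h2 : x ≤ Real.pi - y) : Real.sin y ≤ Real.sin x := by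
  have hpi := Real.pi_pos
  rcases le_total x (Real.pi / 2) with h | h
  · exact Real.strictMonoOn_sin.monotoneOn ⟨by linarith, by linarith⟩ ⟨by linarith, h⟩ h1
  · rw [← Real.sin_pi_sub x]
    exact Real.strictMonoOn_sin.monotoneOn ⟨by linarith, by linarith⟩
      ⟨by linarith, by linarith⟩ (by linarith)

lemma sin_theta_pos (n a : ℕ) (hn : 1 ≤ n) (ha1 : 1 ≤ a) (ha2 : a ≤ n) :
    0 < Real.sin ((2 * (a : ℝ) - 1) * Real.pi / (2 * n)) := by
  have hpi := Real.pi_pos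
  have hnpos : (0 : ℝ) < n := by exact_mod_cast Nat.pos_of_ne_zero (by omega)
  have haR : (1 : ℝ) ≤ (a : ℝ) := by exact_mod_cast ha1
  have haR2 : (a : ℝ) ≤ n := by exact_mod_cast ha2
  apply Real.sin_pos_of_pos_of_lt_pi
  · apply div_pos (by nlinarith) (by linarith)
  · rw [div_lt_iff₀ (by linarith)]
    nlinarith

lemma delta_eq (n : ℕ) (hn : 1 ≤ n) :
    Real.cos (Real.pi / (2 * n)) - Real.cos (3 * Real.pi / (2 * n)) =
      2 * Real.sin (Real.pi / n) * Real.sin (Real.pi / (2 * n)) := by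
  have hn0 : (n : ℝ) ≠ 0 := Nat.cast_ne_zero.2 (by omega)
  rw [Real.cos_sub_cos]
  have e1 : (Real.pi / (2 * n) + 3 * Real.pi / (2 * n)) / 2 = Real.pi / n := by
    field_simp; ring
  have e2 : (Real.pi / (2 * n) - 3 * Real.pi / (2 * n)) / 2 = -(Real.pi / (2 * n)) := by
    field_simp; ring
  rw [e1, e2, Real.sin_neg]
  ring

lemma delta_pos (n : ℕ) (hn : 2 ≤ n) :
    0 < Real.cos (Real.pi / (2 * n)) - Real.cos (3 * Real.pi / (2 * n)) := by
  have hpi := Real.pi_pos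
  have hnR : (2 : ℝ) ≤ n := by exact_mod_cast hn
  rw [delta_eq n (by omega)]
  have h1 : 0 < Real.sin (Real.pi / n) := by
    apply Real.sin_pos_of_pos_of_lt_pi
    · positivity
    · rw [div_lt_iff₀ (by linarith)]; nlinarith
  have h2 : 0 < Real.sin (Real.pi / (2 * n)) := by
    apply Real.sin_pos_of_pos_of_lt_pi
    · positivity
    · rw [div_lt_iff₀ (by linarith)]; nlinarith
  positivity


lemma sin_ge_aux' (n : ℕ) (hn : 1 ≤ n) {c d : ℝ} (hd0 : 0 < d) (hd : d ≤ n) (h1 : d ≤ c)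
    (h2 : c ≤ 2 * n - d) :
    Real.sin (d * Real.pi / (2 * n)) ≤ Real.sin (c * Real.pi / (2 * n)) := by
  have hpi := Real.pi_pos
  have hnpos : (0 : ℝ) < n := by exact_mod_cast Nat.pos_of_ne_zero (by omega)
  apply sin_ge_aux
  · positivity
  · rw [div_le_iff₀ (by positivity)]
    nlinarith
  · rw [div_le_div_iff₀ (by positivity) (by positivity)]
    nlinarith [mul_nonneg (mul_nonneg (sub_nonneg.2 h1) hpi.le) (show (0:ℝ) ≤ 2 * n by positivity)]
  · rw [le_sub_iff_add_le, show c * Real.pi / (2 * n) + d * Real.pi / (2 * n)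
        = (c + d) * Real.pi / (2 * n) by ring, div_le_iff₀ (by positivity)]
    nlinarith

lemma gap_lb (n : ℕ) (hn : 2 ≤ n) (a b : ℕ) (ha1 : 1 ≤ a) (ha2 : a ≤ n)
    (hb1 : 1 ≤ b) (hb2 : b ≤ n) (hab : a < b) :
    Real.cos (Real.pi / (2 * n)) - Real.cos (3 * Real.pi / (2 * n)) ≤
      chebPt n a - chebPt n b := by
  have hpi := Real.pi_pos
  have hn0 : (n : ℝ) ≠ 0 := Nat.cast_ne_zero.2 (by omega)
  have hnR : (2 : ℝ) ≤ n := by exact_mod_cast hn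
  have hnpos : (0 : ℝ) < n := by linarith
  have haR : (1 : ℝ) ≤ (a : ℝ) := by exact_mod_cast ha1
  have hbR : (b : ℝ) ≤ n := by exact_mod_cast hb2
  have habR : (a : ℝ) + 1 ≤ (b : ℝ) := by exact_mod_cast hab
  rw [delta_eq n (by omega)]
  unfold chebPt
  rw [Real.cos_sub_cos]
  have e1 : ((2 * (a : ℝ) - 1) * Real.pi / (2 * n) + (2 * (b : ℝ) - 1) * Real.pi / (2 * n)) / 2
      = ((a : ℝ) + b - 1) * Real.pi / (2 * n) := by field_simp; ring
  have e2 : ((2 * (a : ℝ) - 1) * Real.pi / (2 * n) - (2 * (b : ℝ) - 1) * Real.pi / (2 * n)) / 2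
      = -(((b : ℝ) - a) * Real.pi / (2 * n)) := by field_simp; ring
  rw [e1, e2, Real.sin_neg]
  have hpn : Real.pi / n = 2 * Real.pi / (2 * n) := by field_simp
  have hp2n : Real.pi / (2 * n) = 1 * Real.pi / (2 * n) := by ring
  have key1 : Real.sin (Real.pi / n) ≤ Real.sin (((a : ℝ) + b - 1) * Real.pi / (2 * n)) := by
    rw [hpn]
    apply sin_ge_aux' n (by omega) (by norm_num) hnR (by linarith) (by linarith)
  have key2 : Real.sin (Real.pi / (2 * n)) ≤ Real.sin (((b : ℝ) - a) * Real.pi / (2 * n)) := by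
    rw [hp2n]
    apply sin_ge_aux' n (by omega) (by norm_num) (by linarith) (by linarith) (by linarith)
  have hs1 : 0 ≤ Real.sin (Real.pi / n) := by
    apply Real.sin_nonneg_of_nonneg_of_le_pi
    · positivity
    · rw [div_le_iff₀ (by linarith)]; nlinarith
  have hs2 : 0 ≤ Real.sin (Real.pi / (2 * n)) := by
    apply Real.sin_nonneg_of_nonneg_of_le_pi
    · positivity
    · rw [div_le_iff₀ (by linarith)]; nlinarith
  nlinarith

set_option maxHeartbeats 1000000 in
/-- For `n ≥ 2`, `1 ≤ s ≤ n-1`, a subset `S ⊆ {1,…,n}` with `|S| = s`, and `g` the strictly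
increasing enumeration of `{1,…,n} \ S`, setting `γ_j = ρ_{g j}^{(n)}`, for every
`k ∈ {1,…,n-s}` and every `i ∈ S` the squared Lagrange product satisfies the stated bound. -/
theorem stmt_7 (n s : ℕ) (hn : 2 ≤ n) (hs1 : 1 ≤ s) (hs2 : s ≤ n - 1)
    (S : Finset ℕ) (hS : S ⊆ Finset.Icc 1 n) (hScard : S.card = s)
    (g : Fin (n - s) → ℕ) (hg : StrictMono g)
    (hgmem : ∀ j, g j ∈ Finset.Icc 1 n \ S)
    (γ : Fin (n - s) → ℝ) (hγ : ∀ j, γ j = chebPt n (g j)) :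
    ∀ k : Fin (n - s), ∀ i ∈ S,
      ∏ j ∈ Finset.univ.erase k, ((chebPt n i - γ j) / (γ k - γ j)) ^ 2 ≤
        (4 : ℝ) ^ (s - 1) /
          ((Real.sin ((2 * (i : ℝ) - 1) * Real.pi / (2 * (n : ℝ)))) ^ 2 *
            (Real.cos (Real.pi / (2 * n)) - Real.cos (3 * Real.pi / (2 * n))) ^ (2 * (s - 1))) := by
  intro k i hiS
  set T : Finset ℕ := Finset.Icc 1 n \ S with hT
  set δ : ℝ := Real.cos (Real.pi / (2 * n)) - Real.cos (3 * Real.pi / (2 * n)) with hδdef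
  have hδ : 0 < δ := delta_pos n hn
  have hiIcc : i ∈ Finset.Icc 1 n := hS hiS
  have hi1 : 1 ≤ i := (Finset.mem_Icc.1 hiIcc).1
  have hi2 : i ≤ n := (Finset.mem_Icc.1 hiIcc).2
  have hgk := hgmem k
  have hgkIcc : g k ∈ Finset.Icc 1 n := (Finset.mem_sdiff.1 hgk).1
  have hgkS : g k ∉ S := (Finset.mem_sdiff.1 hgk).2
  have hgk1 : 1 ≤ g k := (Finset.mem_Icc.1 hgkIcc).1
  have hgk2 : g k ≤ n := (Finset.mem_Icc.1 hgkIcc).2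
  have hgki : g k ≠ i := fun h => hgkS (h ▸ hiS)
  have gap : ∀ a b : ℕ, 1 ≤ a → a ≤ n → 1 ≤ b → b ≤ n → a ≠ b →
      δ ≤ |chebPt n a - chebPt n b| := by
    intro a b ha1 ha2 hb1 hb2 hab
    rcases Nat.lt_or_ge a b with h | h
    · exact le_trans (gap_lb n hn a b ha1 ha2 hb1 hb2 h) (le_abs_self _)
    · have h' : b < a := by omega
      have := gap_lb n hn b a hb1 hb2 ha1 ha2 h'
      rw [abs_sub_comm]
      exact le_trans this (le_abs_self _)
  have hub : ∀ a b : ℕ, |chebPt n a - chebPt n b| ≤ 2 := by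
    intro a b
    unfold chebPt
    rw [abs_le]
    constructor <;>
      nlinarith [Real.neg_one_le_cos ((2 * (a : ℝ) - 1) * Real.pi / (2 * n)),
        Real.cos_le_one ((2 * (a : ℝ) - 1) * Real.pi / (2 * n)),
        Real.neg_one_le_cos ((2 * (b : ℝ) - 1) * Real.pi / (2 * n)),
        Real.cos_le_one ((2 * (b : ℝ) - 1) * Real.pi / (2 * n))]
  have hTcard : T.card = n - s := by
    rw [hT, Finset.card_sdiff_of_subset hS, Nat.card_Icc, hScard]
    omega
  have himg : Finset.image g Finset.univ = T := by
    apply Finset.eq_of_subset_of_card_le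
    · intro x hx
      obtain ⟨j, _, rfl⟩ := Finset.mem_image.1 hx
      exact hgmem j
    · rw [hTcard, Finset.card_image_of_injective _ hg.injective]
      simp
  have hN : ∏ j ∈ Finset.univ.erase k, (chebPt n i - γ j)
      = ∏ m ∈ T.erase (g k), (chebPt n i - chebPt n m) := by
    rw [Finset.prod_congr rfl (fun j _ => by rw [hγ j]),
      ← Finset.prod_image (f := fun m => chebPt n i - chebPt n m)
        (fun a _ b _ h => hg.injective h),
      Finset.image_erase hg.injective, himg]
  have hD : ∏ j ∈ Finset.univ.erase k, (γ k - γ j)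
      = ∏ m ∈ T.erase (g k), (chebPt n (g k) - chebPt n m) := by
    rw [Finset.prod_congr rfl (fun j _ => by rw [hγ j, hγ k]),
      ← Finset.prod_image (f := fun m => chebPt n (g k) - chebPt n m)
        (fun a _ b _ h => hg.injective h),
      Finset.image_erase hg.injective, himg]
  have hsplit1 : (Finset.Icc 1 n).erase i = T ∪ S.erase i := by
    ext x
    simp only [Finset.mem_erase, Finset.mem_union, hT, Finset.mem_sdiff, Finset.mem_Icc]
    constructor
    · rintro ⟨hxi, hx⟩
      by_cases hxS : x ∈ S
      · exact Or.inr ⟨hxi, hxS⟩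
      · exact Or.inl ⟨hx, hxS⟩
    · rintro (⟨hx, hxS⟩ | ⟨hxi, hxS⟩)
      · exact ⟨fun h => hxS (h ▸ hiS), hx⟩
      · exact ⟨hxi, Finset.mem_Icc.1 (hS hxS)⟩
  have hsplit2 : (Finset.Icc 1 n).erase (g k) = T.erase (g k) ∪ S := by
    ext x
    simp only [Finset.mem_erase, Finset.mem_union, hT, Finset.mem_sdiff, Finset.mem_Icc]
    constructor
    · rintro ⟨hxgk, hx⟩
      by_cases hxS : x ∈ S
      · exact Or.inr hxS
      · exact Or.inl ⟨hxgk, hx, hxS⟩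
    · rintro (⟨hxgk, hx, hxS⟩ | hxS)
      · exact ⟨hxgk, hx⟩
      · exact ⟨fun h => hgkS (h ▸ hxS), Finset.mem_Icc.1 (hS hxS)⟩
  have hdisj1 : Disjoint T (S.erase i) := by
    rw [Finset.disjoint_left]
    intro x hx hx'
    exact (Finset.mem_sdiff.1 hx).2 (Finset.mem_of_mem_erase hx')
  have hdisj2 : Disjoint (T.erase (g k)) S := by
    rw [Finset.disjoint_left]
    intro x hx hx'
    exact (Finset.mem_sdiff.1 (Finset.mem_of_mem_erase hx)).2 hx'
  have hgkT : g k ∈ T := hgk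
  have hFi : ∏ m ∈ (Finset.Icc 1 n).erase i, (chebPt n i - chebPt n m)
      = (∏ m ∈ T.erase (g k), (chebPt n i - chebPt n m)) *
        ((chebPt n i - chebPt n (g k)) * ∏ m ∈ S.erase i, (chebPt n i - chebPt n m)) := by
    rw [hsplit1, Finset.prod_union hdisj1, ← Finset.mul_prod_erase T _ hgkT]
    ring
  have hFgk : ∏ m ∈ (Finset.Icc 1 n).erase (g k), (chebPt n (g k) - chebPt n m)
      = (∏ m ∈ T.erase (g k), (chebPt n (g k) - chebPt n m)) *
        ((chebPt n (g k) - chebPt n i) * ∏ m ∈ S.erase i, (chebPt n (g k) - chebPt n m)) := by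
    rw [hsplit2, Finset.prod_union hdisj2, ← Finset.mul_prod_erase S _ hiS]
  -- key identities
  have hkey_i := key n (by omega) i hi1 hi2
  have hkey_k := key n (by omega) (g k) hgk1 hgk2
  rw [hFi, abs_mul, abs_mul,
    Finset.abs_prod (S.erase i) (fun m => chebPt n i - chebPt n m)] at hkey_i
  rw [hFgk, abs_mul, abs_mul,
    Finset.abs_prod (S.erase i) (fun m => chebPt n (g k) - chebPt n m),
    abs_sub_comm (chebPt n (g k)) (chebPt n i)] at hkey_k
  set si := Real.sin ((2 * (i : ℝ) - 1) * Real.pi / (2 * (n : ℝ))) with hsi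
  set sk := Real.sin ((2 * ((g k : ℕ) : ℝ) - 1) * Real.pi / (2 * (n : ℝ))) with hsk
  set N := ∏ m ∈ T.erase (g k), (chebPt n i - chebPt n m) with hNdef
  set D := ∏ m ∈ T.erase (g k), (chebPt n (g k) - chebPt n m) with hDdef
  set P1 := ∏ m ∈ S.erase i, |chebPt n i - chebPt n m| with hP1def
  set P2 := ∏ m ∈ S.erase i, |chebPt n (g k) - chebPt n m| with hP2def
  set e := |chebPt n i - chebPt n (g k)| with hedef
  -- positivity facts
  have hepos : 0 < e := lt_of_lt_of_le hδ (gap i (g k) hi1 hi2 hgk1 hgk2 (Ne.symm hgki))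
  have hsipos : 0 < si := sin_theta_pos n i (by omega) hi1 hi2
  have hskpos : 0 < sk := sin_theta_pos n (g k) (by omega) hgk1 hgk2
  have hskle : sk ≤ 1 := Real.sin_le_one _
  have hcard : (S.erase i).card = s - 1 := by
    rw [Finset.card_erase_of_mem hiS, hScard]
  have hmemSm : ∀ m ∈ S.erase i, 1 ≤ m ∧ m ≤ n := by
    intro m hm
    have := Finset.mem_Icc.1 (hS (Finset.mem_of_mem_erase hm))
    omega
  have hP1ge : δ ^ (s - 1) ≤ P1 := by
    rw [hP1def, ← hcard, ← Finset.prod_const]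
    refine Finset.prod_le_prod (fun m _ => hδ.le) (fun m hm => ?_)
    obtain ⟨hm1, hm2⟩ := hmemSm m hm
    exact gap i m hi1 hi2 hm1 hm2 (Ne.symm (Finset.ne_of_mem_erase hm))
  have hP2le : P2 ≤ 2 ^ (s - 1) := by
    rw [hP2def, ← hcard, ← Finset.prod_const]
    exact Finset.prod_le_prod (fun m _ => abs_nonneg _) (fun m _ => hub _ m)
  have hP1pos : 0 < P1 := lt_of_lt_of_le (pow_pos hδ _) hP1ge
  have hP2nonneg : 0 ≤ P2 := Finset.prod_nonneg (fun m _ => abs_nonneg _)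
  have hDne : D ≠ 0 := by
    rw [hDdef]
    refine Finset.prod_ne_zero_iff.2 (fun m hm => ?_)
    have hmT : m ∈ T := Finset.mem_of_mem_erase hm
    have hmIcc := Finset.mem_Icc.1 (Finset.mem_sdiff.1 hmT).1
    have := gap (g k) m hgk1 hgk2 (by omega) (by omega) (Finset.ne_of_mem_erase hm).symm
    intro h0
    rw [h0] at this
    simp at this
    linarith
  have hDpos : 0 < |D| := abs_pos.2 hDne
  -- cancel e
  have hND : |N| * (P1 * si) = |D| * (P2 * sk) := by
    apply mul_left_cancel₀ (ne_of_gt hepos)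
    have h := hkey_i.trans hkey_k.symm
    linear_combination h
  -- transform the goal
  rw [Finset.prod_pow, Finset.prod_div_distrib, hN, hD]
  have hdenpos : 0 < si ^ 2 * δ ^ (2 * (s - 1)) :=
    mul_pos (pow_pos hsipos 2) (pow_pos hδ _)
  have hD2 : (0 : ℝ) < D ^ 2 := by
    rw [← sq_abs]; exact pow_pos hDpos 2
  rw [div_pow, div_le_div_iff₀ hD2 hdenpos]
  have h4 : ((4 : ℝ)) ^ (s - 1) = ((2 : ℝ) ^ (s - 1)) ^ 2 := by
    rw [← pow_mul, mul_comm, pow_mul]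
    norm_num
  have hδ2 : δ ^ (2 * (s - 1)) = (δ ^ (s - 1)) ^ 2 := by
    rw [mul_comm, pow_mul]
  have hsq : N ^ 2 * (P1 ^ 2 * si ^ 2) = D ^ 2 * (P2 ^ 2 * sk ^ 2) := by
    have h2 := congrArg (fun x : ℝ => x ^ 2) hND
    simp only [mul_pow, sq_abs] at h2
    linear_combination h2
  have hstep : P2 * sk * δ ^ (s - 1) ≤ 2 ^ (s - 1) * 1 * P1 := by
    have h1 : P2 * sk ≤ 2 ^ (s - 1) * 1 := mul_le_mul hP2le hskle hskpos.le (by positivity)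
    exact mul_le_mul h1 hP1ge (pow_nonneg hδ.le _) (by positivity)
  have hbig : N ^ 2 * si ^ 2 * (δ ^ (s - 1)) ^ 2 * P1 ^ 2 ≤
      ((2 : ℝ) ^ (s - 1)) ^ 2 * D ^ 2 * P1 ^ 2 := by
    have hl : N ^ 2 * si ^ 2 * (δ ^ (s - 1)) ^ 2 * P1 ^ 2 =
        D ^ 2 * (P2 * sk * δ ^ (s - 1)) ^ 2 := by
      linear_combination (δ ^ (s - 1)) ^ 2 * hsq
    rw [hl]
    have hsq2 : (P2 * sk * δ ^ (s - 1)) ^ 2 ≤ ((2 : ℝ) ^ (s - 1) * 1 * P1) ^ 2 :=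
      pow_le_pow_left₀ (mul_nonneg (mul_nonneg hP2nonneg hskpos.le) (pow_nonneg hδ.le _)) hstep 2
    calc D ^ 2 * (P2 * sk * δ ^ (s - 1)) ^ 2
        ≤ D ^ 2 * ((2 : ℝ) ^ (s - 1) * 1 * P1) ^ 2 :=
          mul_le_mul_of_nonneg_left hsq2 (by positivity)
      _ = ((2 : ℝ) ^ (s - 1)) ^ 2 * D ^ 2 * P1 ^ 2 := by ring
  have hfinal : N ^ 2 * si ^ 2 * (δ ^ (s - 1)) ^ 2 ≤ ((2 : ℝ) ^ (s - 1)) ^ 2 * D ^ 2 :=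
    le_of_mul_le_mul_right hbig (pow_pos hP1pos 2)
  calc N ^ 2 * (si ^ 2 * δ ^ (2 * (s - 1)))
      = N ^ 2 * si ^ 2 * (δ ^ (s - 1)) ^ 2 := by rw [hδ2]; ring
    _ ≤ ((2 : ℝ) ^ (s - 1)) ^ 2 * D ^ 2 := hfinal
    _ = (4 : ℝ) ^ (s - 1) * D ^ 2 := by rw [h4]
end

section
/- Let m ≥ 2 and n ≥ 2 be integers, let A_0,…,A_{m−1} be N₁×N₂ real matrices and B_0,…,B_{n−1} be N₂×N₃ real matrices, and set p_A(x) = Σ_{i=0}^{m−1} A_i T_i(x) and p_B(x) = Σ_{j=0}^{n−1} B_j T_{jm}(x). Then p_A p_B has degree at most mn−1, and in its unique entrywise Chebyshev expansion p_A(x)p_B(x) = Σ_{t=0}^{mn−1} D_t T_t(x) the coefficients are: D_0 = A_0B_0; D_{jm} = A_0B_j for 1 ≤ j ≤ n−1; for 1 ≤ i ≤ m−1: D_i = A_iB_0 + (1/2)A_{m−i}B_1, D_{jm+i} = (1/2)A_iB_j + (1/2)A_{m−i}B_{j+1} for 1 ≤ j ≤ n−2, and D_{(n−1)m+i} = (1/2)A_iB_{n−1}.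 In particular, every product A_iB_j can be recovered as an explicit linear combination of the coefficients D_0,…,D_{mn−1}. -/
open Polynomial Polynomial.Chebyshev Finset

/-!
Writing `2 T_a T_b = T_{a+b} + T_{|a-b|}`, the product `p_A p_B` is an explicit combination of
`T_0, …, T_{mn-1}` whose coefficient at `T_u` collects the pairs `(i, j)` with `i + jm = u` or
`|i - jm| = u`. For `u = jm + i` with `i < m` these are `(i, j)` and, when `i ≠ 0`,
`(m - i, j + 1)`, which gives the stated formulas; the expansion is unique because the `T_u` are
linearly independent. Reading the formulas backwards from the top block `j = n - 1` recovers
every product `A_i B_j`.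
-/

theorem eq_of_forall_sum_eval_T_smul_eq {V : Type*} [AddCommGroup V] [Module ℝ V] {s : Finset ℕ}
    {E F : ℕ → V} (h : ∀ x : ℝ, ∑ u ∈ s, (T ℝ u).eval x • E u = ∑ u ∈ s, (T ℝ u).eval x • F u) :
    ∀ u ∈ s, E u = F u := by
  intro u hu
  rw [← sub_eq_zero]
  refine (Module.forall_dual_apply_eq_zero_iff ℝ (E u - F u)).mp fun φ => ?_
  have hpoly : ∑ v ∈ s, φ (E v - F v) • T ℝ v = 0 := Polynomial.funext fun x => by
    simpa [eval_finsetSum, mul_sub, sub_eq_zero, mul_comm] using congrArg φ (h x)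
  exact linearIndependent_iff'.mp (chebyshevTsequence ℝ).linearIndependent s _ hpoly u hu

/-- The coefficient of `T u` in `T a * T b = (T (a + b) + T |a - b|) / 2`. -/
noncomputable def chebMulCoeff (a b u : ℕ) : ℝ :=
  ((if a + b = u then 1 else 0) + (if ((a : ℤ) - b).natAbs = u then 1 else 0)) / 2

theorem eval_T_mul_eval_T_eq_sum {a b M : ℕ} (h : a + b < M) (x : ℝ) :
    (T ℝ a).eval x * (T ℝ b).eval x = ∑ u ∈ range M, chebMulCoeff a b u * (T ℝ u).eval x := by
  have hprod := congrArg (eval x) (T_mul_T ℝ a b)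
  rw [← T_natAbs (R := ℝ) ((a : ℤ) - b), ← Nat.cast_add] at hprod
  simp only [eval_mul, eval_add, eval_ofNat] at hprod
  simp only [chebMulCoeff, add_div, add_mul, sum_add_distrib, ite_div, ite_mul, zero_div, zero_mul,
    sum_ite_eq, mem_range, h, if_true, show ((a : ℤ) - b).natAbs < M by omega]
  linarith

theorem sum_T_smul_mul_sum_T_smul_eq {ι κ l o p : Type*} [Fintype ι] [Fintype κ] [Fintype o]
    (a : ι → ℕ) (b : κ → ℕ) {M : ℕ} (hM : ∀ i j, a i + b j < M)
    (A : ι → Matrix l o ℝ) (B : κ → Matrix o p ℝ) (x : ℝ) :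
    (∑ i, (T ℝ (a i)).eval x • A i) * (∑ j, (T ℝ (b j)).eval x • B j) =
      ∑ u ∈ range M, (T ℝ u).eval x • ∑ i, ∑ j, chebMulCoeff (a i) (b j) u • (A i * B j) := by
  simp only [Matrix.sum_mul, Matrix.mul_sum, Matrix.smul_mul, Matrix.mul_smul, smul_smul, smul_sum]
  conv_lhs => rw [sum_comm]
  rw [sum_comm (s := range M)]
  refine sum_congr rfl fun i _ => ?_
  rw [sum_comm]
  refine sum_congr rfl fun j _ => ?_
  rw [← sum_smul, mul_comm, eval_T_mul_eval_T_eq_sum (hM i j)]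
  simp only [mul_comm]

theorem mul_add_lt_mul_of_lt {i j m n : ℕ} (hi : i < m) (hj : j < n) : j * m + i < m * n := by
  simpa [add_comm, mul_comm] using Nat.add_mul_lt_mul_of_lt_of_lt hi hj

theorem chebMulCoeff_mul_add {m i i' j j' : ℕ} (hi : i < m) (hi' : i' < m) :
    chebMulCoeff i' (j' * m) (j * m + i) =
      (if i' = i ∧ j' = j then (if i = 0 ∨ j = 0 then 1 else 1 / 2) else 0) +
        (if i ≠ 0 ∧ i' + i = m ∧ j' = j + 1 then 1 / 2 else 0) := by
  -- `omega` cannot multiply: hand it the comparisons of `j * m` with `j' * m` that the case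
  -- split needs
  have hmono (k k' : ℕ) : k * m ≤ k' * m ↔ k ≤ k' := Nat.mul_le_mul_right_iff (by omega)
  have := hmono j j'
  have := hmono j' j
  have := hmono (j + 1) j'
  have := hmono j' (j + 1)
  have := hmono (j + 2) j'
  have := hmono (j' + 1) j
  have := hmono 1 j'
  have := hmono j 0
  simp only [add_mul, one_mul, zero_mul] at *
  unfold chebMulCoeff
  split_ifs <;> first | omega | norm_num

section

variable {l o p : Type*} [Fintype o] {m n : ℕ}

noncomputable def chebProdCoeff (A : Fin m → Matrix l o ℝ) (B : Fin n → Matrix o p ℝ) (u : ℕ) :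
    Matrix l p ℝ :=
  ∑ i : Fin m, ∑ j : Fin n, chebMulCoeff i (j * m) u • (A i * B j)

theorem sum_T_smul_mul_sum_T_smul_eq_chebProdCoeff (A : Fin m → Matrix l o ℝ)
    (B : Fin n → Matrix o p ℝ) (x : ℝ) :
    (∑ i : Fin m, (T ℝ (i : ℕ)).eval x • A i) * (∑ j : Fin n, (T ℝ ((j * m : ℕ))).eval x • B j) =
      ∑ u ∈ range (m * n), (T ℝ u).eval x • chebProdCoeff A B u :=
  sum_T_smul_mul_sum_T_smul_eq _ _
    (fun i j => by simpa [add_comm] using mul_add_lt_mul_of_lt i.2 j.2) A B x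

theorem eq_chebProdCoeff_of_forall_eq_sum (A : Fin m → Matrix l o ℝ) (B : Fin n → Matrix o p ℝ)
    (D : ℕ → Matrix l p ℝ)
    (hD : ∀ x : ℝ, (∑ i : Fin m, (T ℝ (i : ℕ)).eval x • A i) *
      (∑ j : Fin n, (T ℝ ((j * m : ℕ))).eval x • B j) =
        ∑ u ∈ range (m * n), (T ℝ u).eval x • D u) :
    ∀ u < m * n, D u = chebProdCoeff A B u := fun u hu =>
  eq_of_forall_sum_eval_T_smul_eq
    (fun x => (hD x).symm.trans (sum_T_smul_mul_sum_T_smul_eq_chebProdCoeff A B x)) u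
    (mem_range.2 hu)

theorem chebProdCoeff_mul_add (A : Fin m → Matrix l o ℝ) (B : Fin n → Matrix o p ℝ) {i j : ℕ}
    (hi : i < m) (hj : j < n) :
    chebProdCoeff A B (j * m + i) =
      (if i = 0 ∨ j = 0 then 1 else 1 / 2 : ℝ) • (A ⟨i, hi⟩ * B ⟨j, hj⟩) +
        if h : i ≠ 0 ∧ j + 1 < n then (1 / 2 : ℝ) • (A ⟨m - i, by omega⟩ * B ⟨j + 1, h.2⟩)
        else 0 := by
  have hcoeff (i' : Fin m) (j' : ℕ) := chebMulCoeff_mul_add (j := j) (j' := j') hi i'.isLt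
  simp only [chebProdCoeff, hcoeff, add_smul, ite_smul, zero_smul, sum_add_distrib]
  congr 1
  · simp only [← Fin.ext_iff (b := (⟨i, hi⟩ : Fin m)), ← Fin.ext_iff (b := (⟨j, hj⟩ : Fin n))]
    simp [ite_and]
  · split_ifs with h
    · have hcond (i' : Fin m) (j' : Fin n) : (i ≠ 0 ∧ (i' : ℕ) + i = m ∧ (j' : ℕ) = j + 1) ↔
          i' = ⟨m - i, by omega⟩ ∧ j' = ⟨j + 1, h.2⟩ := by
        simp only [Fin.ext_iff]
        omega
      simp [hcond, ite_and]
    · exact sum_eq_zero fun i' _ => sum_eq_zero fun j' _ => if_neg (by have := j'.isLt; omega)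

theorem mul_mem_span_chebProdCoeff (i : Fin m) (j : Fin n) :
    (fun (A : Fin m → Matrix l o ℝ) (B : Fin n → Matrix o p ℝ) => A i * B j) ∈
      Submodule.span ℝ (Set.range fun (u : Fin (m * n)) (A : Fin m → Matrix l o ℝ)
        (B : Fin n → Matrix o p ℝ) => chebProdCoeff A B u) := by
  set S := Submodule.span ℝ (Set.range fun (u : Fin (m * n)) (A : Fin m → Matrix l o ℝ)
    (B : Fin n → Matrix o p ℝ) => chebProdCoeff A B u)
  obtain ⟨j, hj⟩ := j
  induction hj.le using Nat.decreasingInduction generalizing i with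
  | self => exact absurd hj (lt_irrefl n)
  | of_succ k hk ih =>
    have hw : (if (i : ℕ) = 0 ∨ k = 0 then 1 else 1 / 2 : ℝ) ≠ 0 := by split_ifs <;> norm_num
    have hD : (fun (A : Fin m → Matrix l o ℝ) (B : Fin n → Matrix o p ℝ) =>
        chebProdCoeff A B (k * m + i)) ∈ S :=
      Submodule.subset_span ⟨⟨k * m + i, mul_add_lt_mul_of_lt i.2 hk⟩, rfl⟩
    have hnext : (fun (A : Fin m → Matrix l o ℝ) (B : Fin n → Matrix o p ℝ) =>
        if h : (i : ℕ) ≠ 0 ∧ k + 1 < n then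
          (1 / 2 : ℝ) • (A ⟨m - i, by omega⟩ * B ⟨k + 1, h.2⟩) else 0) ∈ S := by
      by_cases h : (i : ℕ) ≠ 0 ∧ k + 1 < n
      · simp only [dif_pos h]
        exact S.smul_mem (1 / 2 : ℝ) (ih ⟨m - i, by omega⟩ h.2)
      · simp only [dif_neg h]
        exact S.zero_mem
    rw [← Submodule.smul_mem_iff S hw]
    convert S.sub_mem hD hnext using 1
    funext A B
    simp [chebProdCoeff_mul_add A B i.2 hj]

theorem exists_mul_eq_sum_smul (i : Fin m) (j : Fin n) :
    ∃ c : ℕ → ℝ, ∀ (A : Fin m → Matrix l o ℝ) (B : Fin n → Matrix o p ℝ) (D : ℕ → Matrix l p ℝ),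
      (∀ x : ℝ, (∑ i : Fin m, (T ℝ (i : ℕ)).eval x • A i) *
        (∑ j : Fin n, (T ℝ ((j * m : ℕ))).eval x • B j) =
          ∑ u ∈ range (m * n), (T ℝ u).eval x • D u) →
      A i * B j = ∑ u ∈ range (m * n), c u • D u := by
  obtain ⟨c, hc⟩ := (Submodule.mem_span_range_iff_exists_fun ℝ).mp
    (mul_mem_span_chebProdCoeff (l := l) (o := o) (p := p) i j)
  refine ⟨fun u => if h : u < m * n then c ⟨u, h⟩ else 0, fun A B D hD => ?_⟩
  rw [← congrFun (congrFun hc A) B, sum_range]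
  simp [eq_chebProdCoeff_of_forall_eq_sum A B D hD]

end

/-- OrthoPoly coefficient identities: with `p_A = ∑ A_i T_i` and `p_B = ∑ B_j T_{jm}`,
the product `p_A p_B` has a Chebyshev expansion of degree at most `mn - 1`, whose
coefficients are given by the stated formulas; in particular every product `A_i B_j` is an
explicit linear combination of the coefficients `D_0,…,D_{mn-1}`. -/
theorem stmt_12 (m n N₁ N₂ N₃ : ℕ) (hm : 2 ≤ m) (hn : 2 ≤ n)
    (A : Fin m → Matrix (Fin N₁) (Fin N₂) ℝ)
    (B : Fin n → Matrix (Fin N₂) (Fin N₃) ℝ)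
    (pA : ℝ → Matrix (Fin N₁) (Fin N₂) ℝ)
    (hpA : ∀ x, pA x = ∑ i : Fin m, (Polynomial.Chebyshev.T ℝ ((i : ℕ) : ℤ)).eval x • A i)
    (pB : ℝ → Matrix (Fin N₂) (Fin N₃) ℝ)
    (hpB : ∀ x, pB x = ∑ j : Fin n,
      (Polynomial.Chebyshev.T ℝ (((j : ℕ) * m : ℕ) : ℤ)).eval x • B j) :
    (∃ Dc : ℕ → Matrix (Fin N₁) (Fin N₃) ℝ,
      ∀ x : ℝ, pA x * pB x =
        ∑ u ∈ Finset.range (m * n), (Polynomial.Chebyshev.T ℝ (u : ℕ)).eval x • Dc u) ∧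
    (∀ Dc : ℕ → Matrix (Fin N₁) (Fin N₃) ℝ,
      (∀ x : ℝ, pA x * pB x =
        ∑ u ∈ Finset.range (m * n), (Polynomial.Chebyshev.T ℝ (u : ℕ)).eval x • Dc u) →
      Dc 0 = A ⟨0, by omega⟩ * B ⟨0, by omega⟩ ∧
      (∀ (j : ℕ) (_hj1 : 1 ≤ j) (_hj2 : j ≤ n - 1),
        Dc (j * m) = A ⟨0, by omega⟩ * B ⟨j, by omega⟩) ∧
      (∀ (i : ℕ) (_hi1 : 1 ≤ i) (_hi2 : i ≤ m - 1),
        Dc i = A ⟨i, by omega⟩ * B ⟨0, by omega⟩ +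
          (1 / 2 : ℝ) • (A ⟨m - i, by omega⟩ * B ⟨1, by omega⟩)) ∧
      (∀ (i : ℕ) (_hi1 : 1 ≤ i) (_hi2 : i ≤ m - 1) (j : ℕ) (_hj1 : 1 ≤ j) (_hj2 : j ≤ n - 2),
        Dc (j * m + i) = (1 / 2 : ℝ) • (A ⟨i, by omega⟩ * B ⟨j, by omega⟩) +
          (1 / 2 : ℝ) • (A ⟨m - i, by omega⟩ * B ⟨j + 1, by omega⟩)) ∧
      (∀ (i : ℕ) (_hi1 : 1 ≤ i) (_hi2 : i ≤ m - 1),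
        Dc ((n - 1) * m + i) = (1 / 2 : ℝ) • (A ⟨i, by omega⟩ * B ⟨n - 1, by omega⟩))) ∧
    (∀ i : Fin m, ∀ j : Fin n, ∃ c : ℕ → ℝ,
      ∀ (A' : Fin m → Matrix (Fin N₁) (Fin N₂) ℝ)
        (B' : Fin n → Matrix (Fin N₂) (Fin N₃) ℝ)
        (Dc : ℕ → Matrix (Fin N₁) (Fin N₃) ℝ),
        (∀ x : ℝ,
          (∑ i' : Fin m, (Polynomial.Chebyshev.T ℝ ((i' : ℕ) : ℤ)).eval x • A' i') *
            (∑ j' : Fin n, (Polynomial.Chebyshev.T ℝ (((j' : ℕ) * m : ℕ) : ℤ)).eval x • B' j') =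
          ∑ u ∈ Finset.range (m * n), (Polynomial.Chebyshev.T ℝ (u : ℕ)).eval x • Dc u) →
        A' i * B' j = ∑ u ∈ Finset.range (m * n), c u • Dc u) := by
  have hcoeff (Dc : ℕ → Matrix (Fin N₁) (Fin N₃) ℝ)
      (hDc : ∀ x : ℝ, pA x * pB x = ∑ u ∈ range (m * n), (T ℝ (u : ℕ)).eval x • Dc u)
      {i j : ℕ} (hi : i < m) (hj : j < n) :=
    (eq_chebProdCoeff_of_forall_eq_sum A B Dc (fun x => by rw [← hpA, ← hpB]; exact hDc x) _
      (mul_add_lt_mul_of_lt hi hj)).trans (chebProdCoeff_mul_add A B hi hj)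
  refine ⟨⟨chebProdCoeff A B, fun x => ?_⟩, fun Dc hDc => ?_, exists_mul_eq_sum_smul⟩
  · rw [hpA, hpB]
    exact sum_T_smul_mul_sum_T_smul_eq_chebProdCoeff A B x
  refine ⟨?_, fun j hj1 hj2 => ?_, fun i hi1 hi2 => ?_, fun i hi1 hi2 j hj1 hj2 => ?_,
    fun i hi1 hi2 => ?_⟩
  · simpa using hcoeff Dc hDc (i := 0) (j := 0) (by omega) (by omega)
  · simpa using hcoeff Dc hDc (i := 0) (j := j) (by omega) (by omega)
  · simpa [show i ≠ 0 by omega, show 1 < n by omega]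
      using hcoeff Dc hDc (i := i) (j := 0) (by omega) (by omega)
  · simpa [show i ≠ 0 by omega, show j ≠ 0 by omega, show j + 1 < n by omega]
      using hcoeff Dc hDc (i := i) (j := j) (by omega) (by omega)
  · simpa [show i ≠ 0 by omega, show n - 1 ≠ 0 by omega, show n - 1 + 1 = n by omega]
      using hcoeff Dc hDc (i := i) (j := n - 1) (by omega) (by omega)
end

section
/- (Gauss quadrature.) Let a < b be reals, let w : [a,b] → ℝ be a nonnegative integrable weight function, and let q_n be a real polynomial of degree n such that ∫_a^b p(x) q_n(x) w(x) dx = 0 for every real polynomial p of degree less than n. Suppose q_n has n distinct real roots η_1 < ⋯ < η_n, all lying in [a,b], and suppose a_1,…,a_n are real numbers such that Σ_{i=1}^{n} a_i f(η_i) = ∫_a^b f(x) w(x) dx for every real polynomial f of degree less than n. Then Σ_{i=1}^{n} a_i f(η_i) = ∫_a^b f(x) w(x) dx for every real polynomial f of degree less than 2n. -/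
/-!
Divide `f` by `q`: `f = q * (f / q) + f % q` with both quotient and remainder of degree `< n`.
The term `q * (f / q)` integrates to zero against `w` by orthogonality and vanishes at every
node `η i` because the nodes are roots of `q`, so both sides of the quadrature rule for `f`
agree with those for the remainder `f % q`, where the rule is exact by assumption.
-/

open Polynomial MeasureTheory

namespace Polynomial

variable {K : Type*} [Field K]

theorem natDegree_div_le_sub (f q : K[X]) : (f / q).natDegree ≤ f.natDegree - q.natDegree := by
  rcases eq_or_ne q 0 with rfl | hq
  · simp
  rw [div_def]
  refine (natDegree_C_mul_le _ _).trans ?_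
  rw [natDegree_divByMonic f (monic_mul_leadingCoeff_inv hq), natDegree_mul_leadingCoeff_inv _ hq]

theorem natDegree_div_lt_and_natDegree_mod_lt {f q : K[X]} {n : ℕ} (hq : q.natDegree = n)
    (hf : f.natDegree < 2 * n) : (f / q).natDegree < n ∧ (f % q).natDegree < n := by
  have hn : n ≠ 0 := by omega
  refine ⟨(natDegree_div_le_sub f q).trans_lt (by omega), ?_⟩
  exact hq ▸ natDegree_mod_lt f (hq ▸ hn)

theorem sum_mul_eval_eq_sum_mul_eval_mod {ι : Type*} [Fintype ι] {η c : ι → K} {q : K[X]}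
    (hroot : ∀ i, q.eval (η i) = 0) (f : K[X]) :
    ∑ i, c i * f.eval (η i) = ∑ i, c i * (f % q).eval (η i) := by
  refine Finset.sum_congr rfl fun i _ => ?_
  conv_lhs => rw [← EuclideanDomain.div_add_mod f q]
  simp [hroot i]

end Polynomial

section Quadrature

variable {a b : ℝ} {w : ℝ → ℝ}

theorem intervalIntegrable_eval_mul (hab : a ≤ b) (hw : IntegrableOn w (Set.Icc a b))
    (p : ℝ[X]) : IntervalIntegrable (fun x => p.eval x * w x) volume a b :=
  ((intervalIntegrable_iff_integrableOn_Icc_of_le hab).2 hw).continuousOn_mul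
    p.continuous.continuousOn

theorem integral_eval_mul_eq_integral_eval_mod_mul (hab : a ≤ b)
    (hw : IntegrableOn w (Set.Icc a b)) {f q : ℝ[X]}
    (horth : ∫ x in a..b, (f / q).eval x * q.eval x * w x = 0) :
    ∫ x in a..b, f.eval x * w x = ∫ x in a..b, (f % q).eval x * w x := by
  have hsplit : (fun x => f.eval x * w x) =
      fun x => (q * (f / q)).eval x * w x + (f % q).eval x * w x := by
    funext x
    rw [← add_mul, ← eval_add, EuclideanDomain.div_add_mod]
  rw [hsplit, intervalIntegral.integral_add (intervalIntegrable_eval_mul hab hw _)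
    (intervalIntegrable_eval_mul hab hw _)]
  simp only [eval_mul, mul_comm (q.eval _), horth, zero_add]

end Quadrature

theorem stmt_14_general (a b : ℝ) (hab : a < b) (w : ℝ → ℝ)
    (hw_int : IntegrableOn w (Set.Icc a b))
    (n : ℕ) (q : Polynomial ℝ) (hq_deg : q.degree = (n : ℕ))
    (hq_orth : ∀ p : Polynomial ℝ, p.natDegree < n →
      (∫ x in a..b, p.eval x * q.eval x * w x) = 0)
    (η : Fin n → ℝ)
    (hη_root : ∀ i, q.eval (η i) = 0)
    (c : Fin n → ℝ)
    (hc : ∀ f : Polynomial ℝ, f.natDegree < n →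
      (∑ i, c i * f.eval (η i)) = ∫ x in a..b, f.eval x * w x) :
    ∀ f : Polynomial ℝ, f.natDegree < 2 * n →
      (∑ i, c i * f.eval (η i)) = ∫ x in a..b, f.eval x * w x := by
  intro f hf
  obtain ⟨hdiv, hmod⟩ :=
    natDegree_div_lt_and_natDegree_mod_lt (natDegree_eq_of_degree_eq_some hq_deg) hf
  rw [sum_mul_eval_eq_sum_mul_eval_mod hη_root, hc _ hmod,
    integral_eval_mul_eq_integral_eval_mod_mul hab.le hw_int (hq_orth _ hdiv)]

/-- Gauss quadrature: if `q` is a degree-`n` polynomial orthogonal (w.r.t. the weight `w` on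
`[a,b]`) to all polynomials of degree `< n`, whose `n` distinct roots `η_1 < ⋯ < η_n` lie in
`[a,b]`, and if the weights `a_i` make the quadrature rule exact for polynomials of degree
`< n`, then the rule is exact for all polynomials of degree `< 2n`. -/
theorem stmt_14 (a b : ℝ) (hab : a < b) (w : ℝ → ℝ)
    (hw_nonneg : ∀ x ∈ Set.Icc a b, 0 ≤ w x)
    (hw_int : IntegrableOn w (Set.Icc a b))
    (n : ℕ) (q : Polynomial ℝ) (hq_deg : q.degree = (n : ℕ))
    (hq_orth : ∀ p : Polynomial ℝ, p.natDegree < n →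
      (∫ x in a..b, p.eval x * q.eval x * w x) = 0)
    (η : Fin n → ℝ) (hη_mono : StrictMono η) (hη_mem : ∀ i, η i ∈ Set.Icc a b)
    (hη_root : ∀ i, q.eval (η i) = 0)
    (c : Fin n → ℝ)
    (hc : ∀ f : Polynomial ℝ, f.natDegree < n →
      (∑ i, c i * f.eval (η i)) = ∫ x in a..b, f.eval x * w x) :
    ∀ f : Polynomial ℝ, f.natDegree < 2 * n →
      (∑ i, c i * f.eval (η i)) = ∫ x in a..b, f.eval x * w x :=
  stmt_14_general a b hab w hw_int n q hq_deg hq_orth η hη_root c hc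
end

section
/- Let a < b be reals and let w : [a,b] → ℝ be a nonnegative integrable weight function such that ∫_a^b p(x)² w(x) dx > 0 for every nonzero real polynomial p. If q_n is a real polynomial of degree n ≥ 1 satisfying ∫_a^b p(x) q_n(x) w(x) dx = 0 for every real polynomial p of degree less than n, then q_n has n distinct real roots, all of which lie in the open interval (a,b). -/
open Polynomial MeasureTheory

/-- Root multiplicity of a product of powers of distinct linear factors. -/
lemma rm_prod (s : Finset ℝ) (k : ℝ → ℕ) (x : ℝ) (hx : x ∈ s) :
    rootMultiplicity x (∏ y ∈ s, (X - C y) ^ (k y)) = k x := by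
  classical
  rw [← Finset.mul_prod_erase s _ hx]
  have hmon : (∏ y ∈ s.erase x, (X - C y) ^ (k y)).Monic :=
    monic_prod_of_monic _ _ fun y _ => (monic_X_sub_C y).pow _
  have hne : (∏ y ∈ s.erase x, (X - C y) ^ (k y)).eval x ≠ 0 := by
    rw [eval_prod]
    refine Finset.prod_ne_zero_iff.mpr fun y hy => ?_
    have hxy : x ≠ y := fun h => (Finset.ne_of_mem_erase hy) h.symm
    simp only [eval_pow, eval_sub, eval_X, eval_C]
    exact pow_ne_zero _ (sub_ne_zero.mpr hxy)
  have h0 : (X - C x) ^ (k x) * ∏ y ∈ s.erase x, (X - C y) ^ (k y) ≠ 0 :=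
    mul_ne_zero (pow_ne_zero _ (X_sub_C_ne_zero x)) hmon.ne_zero
  rw [rootMultiplicity_mul h0, rootMultiplicity_X_sub_C_pow,
    rootMultiplicity_eq_zero hne, add_zero]

/-- Factor out squares: if every root multiplicity on `s` is even, `f = g² r` with `r`
nonvanishing on `s`. -/
lemma even_fact (f : Polynomial ℝ) (hf : f ≠ 0) (s : Set ℝ)
    (hev : ∀ x ∈ s, Even (f.rootMultiplicity x)) :
    ∃ g r : Polynomial ℝ, f = g ^ 2 * r ∧ ∀ x ∈ s, r.eval x ≠ 0 := by
  classical
  set R : Finset ℝ := f.roots.toFinset.filter (· ∈ s) with hR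
  set g : Polynomial ℝ := ∏ x ∈ R, (X - C x) ^ (f.rootMultiplicity x / 2) with hg
  have hg2 : g ^ 2 = ∏ x ∈ R, (X - C x) ^ (f.rootMultiplicity x) := by
    rw [hg, ← Finset.prod_pow]
    refine Finset.prod_congr rfl fun x hx => ?_
    rw [← pow_mul]
    congr 1
    have hxs : x ∈ s := (Finset.mem_filter.mp hx).2
    obtain ⟨c, hc⟩ := hev x hxs
    omega
  have hdvd : g ^ 2 ∣ f := by
    rw [hg2]
    apply Finset.prod_dvd_of_coprime
    · intro x hx y hy hxy
      exact (pairwise_coprime_X_sub_C Function.injective_id hxy).pow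
    · intro x hx
      exact pow_rootMultiplicity_dvd f x
  obtain ⟨r, hr⟩ := hdvd
  have hr0 : r ≠ 0 := fun h => hf (by rw [hr, h, mul_zero])
  refine ⟨g, r, hr, ?_⟩
  intro x hxs hx0
  by_cases hroot : f.eval x = 0
  · have hxR : x ∈ R :=
      Finset.mem_filter.mpr ⟨Multiset.mem_toFinset.mpr (mem_roots'.mpr ⟨hf, hroot⟩), hxs⟩
    have h1 : rootMultiplicity x (g ^ 2) = f.rootMultiplicity x := by
      rw [hg2]; exact rm_prod R _ x hxR
    have h2 : rootMultiplicity x f = rootMultiplicity x (g ^ 2) + rootMultiplicity x r := by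
      conv_lhs => rw [hr]
      exact rootMultiplicity_mul (hr ▸ hf)
    have h3 : 0 < rootMultiplicity x r := (rootMultiplicity_pos hr0).mpr hx0
    omega
  · exact hroot (by rw [hr, eval_mul, hx0, mul_zero])

/-- A polynomial with no zeros on an interval has constant sign there. -/
lemma sign_const (a b : ℝ) (h : Polynomial ℝ)
    (hne : ∀ x ∈ Set.Ioo a b, h.eval x ≠ 0) :
    (∀ x ∈ Set.Ioo a b, 0 < h.eval x) ∨ (∀ x ∈ Set.Ioo a b, h.eval x < 0) := by
  by_contra hc
  push_neg at hc
  obtain ⟨⟨u, hu, hu'⟩, ⟨v, hv, hv'⟩⟩ := hc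
  have h1 : h.eval u ≤ 0 := hu'
  have h2 : 0 ≤ h.eval v := hv'
  have hmem : (0 : ℝ) ∈ Set.uIcc (h.eval u) (h.eval v) :=
    Set.mem_uIcc.mpr (Or.inl ⟨h1, h2⟩)
  obtain ⟨y, hy, hy0⟩ :=
    intermediate_value_uIcc (f := fun x => h.eval x) (h.continuous_aeval.continuousOn) hmem
  exact hne y (Set.ordConnected_Ioo.uIcc_subset hu hv hy) hy0

/-- Key positivity: a nonzero polynomial nonnegative on `(a,b)` has nonzero weighted
integral, given the weight has positive total integral. -/
lemma key_pos (a b : ℝ) (hab : a < b) (w : ℝ → ℝ)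
    (hw_nonneg : ∀ x ∈ Set.Icc a b, 0 ≤ w x)
    (hw_int : IntegrableOn w (Set.Icc a b))
    (hwpos : (0 : ℝ) < ∫ x in a..b, w x)
    (f : Polynomial ℝ) (hf : f ≠ 0)
    (hfnn : ∀ x ∈ Set.Ioo a b, 0 ≤ f.eval x) :
    (∫ x in a..b, f.eval x * w x) ≠ 0 := by
  intro h0
  have hab' : a ≤ b := hab.le
  have hint : IntegrableOn (fun x => f.eval x * w x) (Set.Icc a b) :=
    IntegrableOn.continuousOn_mul (f.continuous_aeval.continuousOn) hw_int isCompact_Icc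
  have hintIoo : IntegrableOn (fun x => f.eval x * w x) (Set.Ioo a b) :=
    hint.mono_set Set.Ioo_subset_Icc_self
  rw [intervalIntegral.integral_of_le hab', MeasureTheory.integral_Ioc_eq_integral_Ioo] at h0
  have hnn : 0 ≤ᵐ[volume.restrict (Set.Ioo a b)] fun x => f.eval x * w x :=
    (ae_restrict_iff' measurableSet_Ioo).mpr (Filter.Eventually.of_forall fun x hx =>
      mul_nonneg (hfnn x hx) (hw_nonneg x (Set.Ioo_subset_Icc_self hx)))
  have hzero : (fun x => f.eval x * w x) =ᵐ[volume.restrict (Set.Ioo a b)] 0 :=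
    (MeasureTheory.integral_eq_zero_iff_of_nonneg_ae hnn hintIoo).mp h0
  have hroots : ∀ᵐ x ∂(volume.restrict (Set.Ioo a b)), f.eval x ≠ 0 := by
    have hfin : {x : ℝ | f.IsRoot x}.Finite := Polynomial.finite_setOf_isRoot hf
    have : volume {x : ℝ | f.IsRoot x} = 0 := hfin.measure_zero _
    have hae : ∀ᵐ x ∂(volume : Measure ℝ), f.eval x ≠ 0 := by
      rw [MeasureTheory.ae_iff]
      simpa [Polynomial.IsRoot] using this
    exact MeasureTheory.ae_restrict_of_ae hae
  have hw0 : w =ᵐ[volume.restrict (Set.Ioo a b)] 0 := by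
    filter_upwards [hzero, hroots] with x h1 h2
    have : f.eval x * w x = 0 := h1
    exact (mul_eq_zero.mp this).resolve_left h2
  have : (∫ x in Set.Ioo a b, w x) = 0 := by
    rw [MeasureTheory.integral_congr_ae hw0]
    simp
  rw [intervalIntegral.integral_of_le hab', MeasureTheory.integral_Ioc_eq_integral_Ioo,
    this] at hwpos
  exact lt_irrefl _ hwpos

/-- A degree-`n` polynomial orthogonal (w.r.t. a positive-definite nonnegative integrable
weight `w` on `[a,b]`) to all polynomials of degree `< n` has `n` distinct real roots, all
lying in the open interval `(a,b)`. -/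
theorem stmt_15 (a b : ℝ) (hab : a < b) (w : ℝ → ℝ)
    (hw_nonneg : ∀ x ∈ Set.Icc a b, 0 ≤ w x)
    (hw_int : IntegrableOn w (Set.Icc a b))
    (hw_pos : ∀ p : Polynomial ℝ, p ≠ 0 → 0 < ∫ x in a..b, (p.eval x) ^ 2 * w x)
    (n : ℕ) (hn : 1 ≤ n) (q : Polynomial ℝ) (hq_deg : q.degree = (n : ℕ))
    (hq_orth : ∀ p : Polynomial ℝ, p.natDegree < n →
      (∫ x in a..b, p.eval x * q.eval x * w x) = 0) :
    ∃ η : Fin n → ℝ, StrictMono η ∧ (∀ i, η i ∈ Set.Ioo a b) ∧ ∀ i, q.eval (η i) = 0 := by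
  classical
  have hq0 : q ≠ 0 := fun h => by simp [h] at hq_deg
  have hqnat : q.natDegree = n := natDegree_eq_of_degree_eq_some hq_deg
  set T : Finset ℝ :=
    q.roots.toFinset.filter (fun x => x ∈ Set.Ioo a b ∧ Odd (q.rootMultiplicity x)) with hT
  have hTcard_le : T.card ≤ n := by
    calc T.card ≤ q.roots.toFinset.card := Finset.card_le_card (Finset.filter_subset _ _)
    _ ≤ Multiset.card q.roots := Multiset.toFinset_card_le _
    _ ≤ q.natDegree := q.card_roots'
    _ = n := hqnat
  have hwpos : (0 : ℝ) < ∫ x in a..b, w x := by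
    have := hw_pos 1 one_ne_zero
    simpa using this
  have hTcard : T.card = n := by
    by_contra hne
    have hlt : T.card < n := lt_of_le_of_ne hTcard_le hne
    set p : Polynomial ℝ := ∏ x ∈ T, (X - C x) with hp
    have hpmonic : p.Monic := monic_prod_of_monic _ _ fun x _ => monic_X_sub_C x
    have hp0 : p ≠ 0 := hpmonic.ne_zero
    have hpdeg : p.natDegree = T.card := by
      rw [hp, natDegree_prod _ _ fun x _ => X_sub_C_ne_zero x]
      simp
    have horth := hq_orth p (by rw [hpdeg]; exact hlt)
    set f : Polynomial ℝ := p * q with hfdef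
    have hf0 : f ≠ 0 := mul_ne_zero hp0 hq0
    have hfw : (∫ x in a..b, f.eval x * w x) = 0 := by
      have : (fun x => f.eval x * w x) = fun x => p.eval x * q.eval x * w x := by
        funext x; rw [hfdef, eval_mul]
      rw [this]; exact horth
    have heven : ∀ x ∈ Set.Ioo a b, Even (f.rootMultiplicity x) := by
      intro x hx
      have hmul : f.rootMultiplicity x = p.rootMultiplicity x + q.rootMultiplicity x :=
        rootMultiplicity_mul hf0
      by_cases hodd : Odd (q.rootMultiplicity x)
      · have hxroot : q.eval x = 0 := by
          by_contra h
          rw [rootMultiplicity_eq_zero h] at hodd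
          simp at hodd
        have hxT : x ∈ T := Finset.mem_filter.mpr
          ⟨Multiset.mem_toFinset.mpr (mem_roots'.mpr ⟨hq0, hxroot⟩), hx, hodd⟩
        have hp1 : p.rootMultiplicity x = 1 := by
          have := rm_prod T (fun _ => 1) x hxT
          simpa [hp] using this
        rw [hmul, hp1]
        obtain ⟨k, hk⟩ := hodd
        exact ⟨k + 1, by omega⟩
      · have hxT : x ∉ T := fun hxT => hodd (Finset.mem_filter.mp hxT).2.2
        have hpz : p.rootMultiplicity x = 0 := by
          apply rootMultiplicity_eq_zero
          rw [hp, Polynomial.IsRoot, eval_prod]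
          refine Finset.prod_ne_zero_iff.mpr fun y hy => ?_
          simp only [eval_sub, eval_X, eval_C]
          exact sub_ne_zero.mpr (fun h => hxT (h ▸ hy))
        rw [hmul, hpz, zero_add]
        exact Nat.not_odd_iff_even.mp hodd
    obtain ⟨g, r, hfgr, hrne⟩ := even_fact f hf0 (Set.Ioo a b) heven
    rcases sign_const a b r hrne with hpos | hneg
    · refine key_pos a b hab w hw_nonneg hw_int hwpos f hf0 ?_ hfw
      intro x hx
      rw [hfgr, eval_mul, eval_pow]
      exact mul_nonneg (sq_nonneg _) (hpos x hx).le
    · refine key_pos a b hab w hw_nonneg hw_int hwpos (-f) (neg_ne_zero.mpr hf0) ?_ ?_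
      · intro x hx
        have heq : eval x (-f) = (eval x g) ^ 2 * (-(eval x r)) := by
          rw [hfgr]; simp [eval_mul]
        rw [heq]
        exact mul_nonneg (sq_nonneg _) (neg_nonneg.mpr (hneg x hx).le)
      · simp only [eval_neg, neg_mul]
        rw [intervalIntegral.integral_neg, hfw, neg_zero]
  refine ⟨fun i => ((T.orderIsoOfFin hTcard i : T) : ℝ), ?_, ?_, ?_⟩
  · intro i j hij
    exact Subtype.coe_lt_coe.mpr ((T.orderIsoOfFin hTcard).strictMono hij)
  · intro i
    have hmem := (T.orderIsoOfFin hTcard i).2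
    exact (Finset.mem_filter.mp hmem).2.1
  · intro i
    have hmem := (T.orderIsoOfFin hTcard i).2
    have := Multiset.mem_toFinset.mp (Finset.mem_filter.mp hmem).1
    exact (mem_roots'.mp this).2
end
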